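/- Let k be a commutative ring, n ≥ 2, and x ∈ k. For y ∈ k let X(y) be the block-shift (n−1)×(n−1) matrix over k with entries X(y)_{i,j} = y if j ≡ i + 1 (mod n−1) and 0 otherwise. For nonnegative integers ℓ₁, …, ℓₙ, the n-ary product of the polyadic monomials X(x^{d_{ℓᵢ}}) with quantized degrees d_ℓ = ℓ(n−1)+1 is again a polyadic monomial of quantized degree: X(x^{ℓ₁(n−1)+1}) · X(x^{ℓ₂(n−1)+1}) · ⋯ · X(x^{ℓₙ(n−1)+1}) = X(x^{(ℓ₁+⋯+ℓₙ+1)(n−1)+1}). -/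
import Mathlib


/-- The block-shift `(n−1) × (n−1)` matrix `X(x)` with entries
`X(x)_{i,j} = x` if `j ≡ i + 1 (mod n−1)` and `0` otherwise. -/
def blockShift (n : ℕ) {k : Type*} [CommRing k] (x : k) :
    Matrix (Fin (n - 1)) (Fin (n - 1)) k :=
  Matrix.of fun i j => if (j : ℕ) = ((i : ℕ) + 1) % (n - 1) then x else 0

/-- General shift-by-`m` matrix. -/
def genShift (n m : ℕ) {k : Type*} [CommRing k] (a : k) :
    Matrix (Fin (n - 1)) (Fin (n - 1)) k :=
  Matrix.of fun i j => if (j : ℕ) = ((i : ℕ) + m) % (n - 1) then a else 0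

lemma genShift_one {k : Type*} [CommRing k] (n : ℕ) (a : k) :
    genShift n 1 a = blockShift n a := rfl

lemma genShift_zero_one {k : Type*} [CommRing k] (n : ℕ) (hn : 2 ≤ n) :
    genShift n 0 (1 : k) = 1 := by
  ext i j
  simp only [genShift, Matrix.of_apply, Matrix.one_apply, Nat.add_zero,
    Nat.mod_eq_of_lt i.isLt]
  simp [Fin.val_eq_val, eq_comm]

lemma genShift_mul {k : Type*} [CommRing k] (n m : ℕ) (hn : 2 ≤ n) (a b : k) :
    genShift n m a * blockShift n b = genShift n (m + 1) (a * b) := by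
  have h : 0 < n - 1 := by omega
  ext i j
  rw [Matrix.mul_apply,
    Finset.sum_eq_single (⟨((i : ℕ) + m) % (n - 1), Nat.mod_lt _ h⟩ : Fin (n - 1))]
  · simp only [genShift, blockShift, Matrix.of_apply, if_pos rfl]
    rw [Nat.mod_add_mod, ← Nat.add_assoc]
    by_cases hj : (j : ℕ) = ((i : ℕ) + m + 1) % (n - 1) <;> simp [hj]
  · intro p _ hp
    have : (p : ℕ) ≠ ((i : ℕ) + m) % (n - 1) := fun hc => hp (Fin.ext hc)
    simp [genShift, this]
  · simp

lemma genShift_period {k : Type*} [CommRing k] (n m : ℕ) (a : k) :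
    genShift n (m + (n - 1)) a = genShift n m a := by
  ext i j
  simp [genShift, ← Nat.add_assoc, Nat.add_mod_right]

lemma genShift_list_prod {k : Type*} [CommRing k] (n : ℕ) (hn : 2 ≤ n) (m : ℕ) (a : k)
    (L : List k) :
    genShift n m a * (L.map (blockShift n)).prod =
      genShift n (m + L.length) (a * L.prod) := by
  induction L generalizing m a with
  | nil => simp
  | cons b L ih =>
    simp only [List.map_cons, List.prod_cons, ← Matrix.mul_assoc,
      genShift_mul n m hn a b, ih, List.length_cons]
    rw [show m + 1 + L.length = m + (L.length + 1) by omega, mul_assoc]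

lemma genShift_n {k : Type*} [CommRing k] (n : ℕ) (hn : 2 ≤ n) (a : k) :
    genShift n n a = blockShift n a := by
  ext i j
  have h : (i : ℕ) + n = (i : ℕ) + 1 + (n - 1) := by omega
  simp [genShift, blockShift, h, Nat.add_mod_right]

/-- the `n`-ary product of polyadic monomials `X(x^{d_{ℓᵢ}})`
with quantized degrees `d_ℓ = ℓ(n−1)+1` is again a polyadic monomial of
quantized degree, with polyadic power `ℓ₁ + ⋯ + ℓₙ + 1`. -/
theorem blockShift_monomial_product {k : Type*} [CommRing k] (n : ℕ)
    (hn : 2 ≤ n) (x : k) (ℓ : Fin n → ℕ) :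
    (List.ofFn fun i => blockShift n (x ^ (ℓ i * (n - 1) + 1))).prod =
      blockShift n (x ^ ((∑ i, ℓ i + 1) * (n - 1) + 1)) := by
  have key : (List.ofFn fun i => blockShift n (x ^ (ℓ i * (n - 1) + 1))) =
      (List.ofFn fun i => x ^ (ℓ i * (n - 1) + 1)).map (blockShift n) := by
    rw [List.map_ofFn]; rfl
  rw [key, ← one_mul ((List.map (blockShift n) _).prod),
    ← genShift_zero_one n hn (k := k), genShift_list_prod n hn]
  simp only [List.length_ofFn, List.prod_ofFn, Nat.zero_add, one_mul]
  rw [Finset.prod_pow_eq_pow_sum]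
  have hexp : ∑ i, (ℓ i * (n - 1) + 1) = ((∑ i, ℓ i) + 1) * (n - 1) + 1 := by
    rw [Finset.sum_add_distrib, ← Finset.sum_mul, add_mul, one_mul]
    simp only [Finset.sum_const, Finset.card_univ, Fintype.card_fin, smul_eq_mul, mul_one]
    omega
  rw [hexp, genShift_n n hn]
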